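/- arXiv:1905.08554 — 7 statements merged into one kernel-verified Lean document; each statement's English description precedes it below -/
import Mathlib

section
/- The synchrony law holds for synchronous languages: for singleton-letter languages A = {x} and B = {y} with x, y ∈ P_n(Σ), and any synchronous languages K, L, we have (A·K) × (B·L) = (A × B)·(K × L). -/
/-- Letters of synchronous strings: nonempty subsets of the alphabet `σ`. -/
def Letter (σ : Type*) := {A : Set σ // A.Nonempty}

instance {σ : Type*} : Union (Letter σ) :=
  ⟨fun x y => ⟨x.1 ∪ y.1, x.2.mono Set.subset_union_left⟩⟩

/-- The synchronous product of words over `P_n(σ)`: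
`u × ε = u = ε × u` and `(x·u) × (y·v) = (x ∪ y)·(u × v)`. -/
def sync {σ : Type*} : List (Letter σ) → List (Letter σ) → List (Letter σ)
  | u, [] => u
  | [], v => v
  | x :: u, y :: v => (x ∪ y) :: sync u v

/-- The synchronous product of languages of synchronous strings. -/
def synchProd {σ : Type*} (K L : Language (Letter σ)) : Language (Letter σ) :=
  {w | ∃ u ∈ K, ∃ v ∈ L, w = sync u v}

/-- The synchrony law for synchronous languages: for singleton one-letter
languages `A = {x}` and `B = {y}`, `(A·K) × (B·L) = (A × B)·(K × L)`. -/
theorem synchrony_law {σ : Type*} (x y : Letter σ) (K L : Language (Letter σ)) :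
    synchProd (({[x]} : Language (Letter σ)) * K) (({[y]} : Language (Letter σ)) * L) =
      synchProd ({[x]} : Language (Letter σ)) ({[y]} : Language (Letter σ)) *
        synchProd K L := by
  ext w
  constructor
  · rintro ⟨u, hu, v, hv, rfl⟩
    rw [Language.mem_mul] at hu hv
    obtain ⟨a, ha, u', hu', rfl⟩ := hu
    obtain ⟨b, hb, v', hv', rfl⟩ := hv
    replace ha : a = [x] := ha
    replace hb : b = [y] := hb
    subst ha; subst hb
    rw [Language.mem_mul]
    exact ⟨[x ∪ y], ⟨[x], rfl, [y], rfl, rfl⟩, sync u' v', ⟨u', hu', v', hv', rfl⟩, rfl⟩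
  · rintro h
    rw [Language.mem_mul] at h
    obtain ⟨a, ⟨p, hp, q, hq, rfl⟩, b, ⟨u', hu', v', hv', rfl⟩, rfl⟩ := h
    replace hp : p = [x] := hp
    replace hq : q = [y] := hq
    subst hp; subst hq
    refine ⟨x :: u', ?_, y :: v', ?_, rfl⟩
    · exact Language.mem_mul.mpr ⟨[x], rfl, u', hu', rfl⟩
    · exact Language.mem_mul.mpr ⟨[y], rfl, v', hv', rfl⟩
end

section
/- In any synchronous F₁-algebra, for every semilattice element α, α* × α* = α*. -/
open Computability

/-- A synchronous F₁-algebra: an F₁-algebra in the sense of Salomaa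
(idempotent semiring, star unfolding, loop tightening, unique fixpoint axiom,
and the empty-word-property map `H`), together with a semilattice `S` of
synchronous atoms and a synchronous product `×` satisfying the synchrony law. -/
class SF1Algebra (A : Type*) extends Add A, Mul A, KStar A, Zero A, One A where
  /-- The designated semilattice of synchronous atoms. -/
  S : Set A
  /-- The synchronous product `×`. -/
  sprod : A → A → A
  /-- The empty-word-property map. -/
  H : A → A
  add_assoc : ∀ e f g : A, e + (f + g) = (e + f) + g
  add_comm : ∀ e f : A, e + f = f + e
  add_zero : ∀ e : A, e + 0 = e
  add_idem : ∀ e : A, e + e = e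
  mul_one : ∀ e : A, e * 1 = e
  one_mul : ∀ e : A, 1 * e = e
  mul_zero : ∀ e : A, e * 0 = 0
  zero_mul : ∀ e : A, 0 * e = 0
  mul_assoc : ∀ e f g : A, e * (f * g) = (e * f) * g
  kstar_unfold_left : ∀ e : A, e∗ = 1 + e * e∗
  kstar_unfold_right : ∀ e : A, e∗ = 1 + e∗ * e
  right_distrib : ∀ e f g : A, (e + f) * g = e * g + f * g
  left_distrib : ∀ e f g : A, e * (f + g) = e * f + e * g
  /-- Loop tightening: `(e + 1)∗ = e∗`. -/
  loop_tighten : ∀ e : A, (e + 1)∗ = e∗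
  /-- The unique fixpoint axiom: if `H f = 0` and `e + f·g = g` then `f∗·e = g`. -/
  unique_fixpoint : ∀ e f g : A, H f = 0 → e + f * g = g → f∗ * e = g
  H_zero : H 0 = 0
  H_one : H 1 = 1
  H_add : ∀ e f : A, H (e + f) = H e + H f
  H_mul : ∀ e f : A, H (e * f) = H e * H f
  H_kstar : ∀ e : A, H (e∗) = (H e)∗
  /-- `S` is closed under the synchronous product. -/
  S_closed : ∀ α ∈ S, ∀ β ∈ S, sprod α β ∈ S
  /-- `(S, ×)` is a semilattice: `×` is idempotent on `S`. -/
  sprod_idem : ∀ α ∈ S, sprod α α = α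
  sprod_assoc : ∀ e f g : A, sprod e (sprod f g) = sprod (sprod e f) g
  sprod_comm : ∀ e f : A, sprod e f = sprod f e
  sprod_distrib : ∀ e f g : A, sprod e (f + g) = sprod e f + sprod e g
  sprod_one : ∀ e : A, sprod e 1 = e
  sprod_zero : ∀ e : A, sprod e 0 = 0
  /-- The synchrony law, for `α, β ∈ S`. -/
  synchrony : ∀ α ∈ S, ∀ β ∈ S, ∀ e f : A,
    sprod (α * e) (β * f) = sprod α β * sprod e f
  H_sprod : ∀ e f : A, H (sprod e f) = sprod (H e) (H f)
  H_S : ∀ α ∈ S, H α = 0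

/-! Since `α ∈ S` is idempotent under `×`, synchrony gives `α∗ × α∗ = α∗ + α · (α∗ × α∗)`,
and `α∗ · α∗` solves the same equation `g = α∗ + α · g`. As `H α = 0`, the unique fixpoint
axiom identifies both solutions with `α∗ · α∗`, which in turn equals `α∗`. -/

namespace SF1Algebra

variable {A : Type*} [SF1Algebra A]

theorem kstar_add_mul_kstar (e : A) : e∗ + e * e∗ = e∗ :=
  calc e∗ + e * e∗ = 1 + (e * e∗ + e * e∗) := by rw [add_assoc, ← kstar_unfold_left]
    _ = e∗ := by rw [add_idem, ← kstar_unfold_left]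

theorem kstar_mul_kstar {e : A} (he : H e = 0) : e∗ * e∗ = e∗ :=
  unique_fixpoint _ _ _ he (kstar_add_mul_kstar e)

theorem sprod_one_add_self (x : A) : sprod (1 + x) (1 + x) = 1 + x + sprod x x := by
  rw [sprod_distrib, sprod_one, sprod_comm (1 + x) x, sprod_distrib, sprod_one, add_assoc,
    ← add_assoc 1 x x, add_idem]

theorem sprod_mul_self {α : A} (hα : α ∈ S) (e : A) :
    sprod (α * e) (α * e) = α * sprod e e := by
  rw [synchrony α hα α hα, sprod_idem α hα]

theorem kstar_add_mul_sprod_kstar_self {α : A} (hα : α ∈ S) :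
    α∗ + α * sprod α∗ α∗ = sprod α∗ α∗ := by
  conv_rhs => rw [kstar_unfold_left α]
  rw [sprod_one_add_self, sprod_mul_self hα, ← kstar_unfold_left]

end SF1Algebra

/-- In any synchronous F₁-algebra, `α∗ × α∗ = α∗` for every semilattice element `α`. -/
theorem sprod_kstar_self {A : Type*} [SF1Algebra A] (α : A)
    (hα : α ∈ SF1Algebra.S (A := A)) :
    SF1Algebra.sprod (α∗) (α∗) = α∗ := by
  have hH : SF1Algebra.H α = 0 := SF1Algebra.H_S α hα
  calc SF1Algebra.sprod α∗ α∗ = α∗ * α∗ :=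
        (SF1Algebra.unique_fixpoint _ _ _ hH (SF1Algebra.kstar_add_mul_sprod_kstar_self hα)).symm
    _ = α∗ := SF1Algebra.kstar_mul_kstar hH
end

section
/- In the countermodel M = (L_s ∪ {†}), where L_s is the set of all languages over the one-letter alphabet {s} of P_n-letters and † is a fresh element, the operations defined in the paper satisfy the Kleene algebra least-fixpoint axiom: for all K, L, J in the carrier, K + L·J ≤ J implies L*·K ≤ J. -/
open Computability

/-- The carrier of the countermodel: synchronous languages over the one-letter
alphabet `{s}` (so letters are `P_n({s})`), together with a fresh element `†`
(represented by `none`). -/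
abbrev CModel := Option (Language (Letter Unit))

/-- Addition in the countermodel: `† ` if either argument is `†`, union otherwise. -/
def cAdd : CModel → CModel → CModel
  | some K, some L => some (K + L)
  | _, _ => none

open Classical in
/-- Multiplication in the countermodel: `∅` if either argument is `∅`,
otherwise `†` if either argument is `†`, otherwise elementwise concatenation. -/
noncomputable def cMul : CModel → CModel → CModel
  | some K, some L => some (K * L)
  | some K, none => if K = 0 then some 0 else none
  | none, some L => if L = 0 then some 0 else none
  | none, none => none

/-- Star in the countermodel: `†` on `†`, Kleene star otherwise. -/
def cStar : CModel → CModel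
  | some K => some (K∗)
  | none => none

/-- The natural order: `K ≤ L` iff `K + L = L`. -/
def cLe (K L : CModel) : Prop := cAdd K L = L

/-! Every element lies below `†`, so only `J = some j` needs an argument. Then `K + L·J ≤ J`
forces `K` and `L·J` to be languages below `j`. If `L` is a language, this is the least-fixpoint
law of the Kleene algebra of languages. If `L = †`, then `†·j` is a language only for `j = ∅`,
so `K = ∅` and `L*·K = †·∅ = ∅`. -/

theorem cLe_none (K : CModel) : cLe K none := by
  cases K <;> rfl

theorem cLe_zero (J : CModel) : cLe (some 0) J := by
  cases J <;> simp [cLe, cAdd]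

theorem some_cLe_some_iff {k j : Language (Letter Unit)} : cLe (some k) (some j) ↔ k ≤ j := by
  simp [cLe, cAdd]

theorem cLe_some_iff {K : CModel} {j : Language (Letter Unit)} :
    cLe K (some j) ↔ ∃ k, K = some k ∧ k ≤ j := by
  cases K <;> simp [cLe, cAdd]

theorem cAdd_cLe_iff {A B J : CModel} : cLe (cAdd A B) J ↔ cLe A J ∧ cLe B J := by
  cases J
  · simp [cLe_none]
  · cases A <;> cases B <;> simp [cLe, cAdd]

theorem eq_zero_of_cMul_none_cLe {j : Language (Letter Unit)}
    (h : cLe (cMul none (some j)) (some j)) : j = 0 := by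
  by_contra hj
  simp [cMul, hj, cLe, cAdd] at h

/-- The countermodel satisfies the least-fixpoint axiom of Kleene algebra:
`K + L·J ≤ J` implies `L∗·K ≤ J`. -/
theorem cModel_lfp (K L J : CModel) (h : cLe (cAdd K (cMul L J)) J) :
    cLe (cMul (cStar L) K) J := by
  obtain _ | j := J
  · exact cLe_none _
  obtain ⟨hK, hLJ⟩ := cAdd_cLe_iff.mp h
  obtain ⟨k, rfl, hk⟩ := cLe_some_iff.mp hK
  obtain _ | l := L
  · obtain rfl := eq_zero_of_cMul_none_cLe hLJ
    obtain rfl : k = 0 := le_bot_iff.mp hk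
    simpa [cMul, cStar] using cLe_zero (some 0)
  · rw [cMul, some_cLe_some_iff] at hLJ
    rw [cStar, cMul, some_cLe_some_iff]
    exact kstar_mul_le hk hLJ
end

section
/- In the countermodel, the synchronous product defined to diverge on two infinite languages satisfies the synchrony axiom: ({{s}}·K) × ({{s}}·L) = ({{s}} × {{s}})·(K × L) for all K, L in the carrier L_s ∪ {†}. -/
open Classical in
/-- The synchronous product in the countermodel: `∅` if either argument is `∅`;
otherwise `†` if either argument is `†` or both are infinite languages;
otherwise the elementwise synchronous product. -/
noncomputable def cSync : CModel → CModel → CModel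
  | some K, some L =>
      if K = 0 ∨ L = 0 then some 0
      else if K.Infinite ∧ L.Infinite then none
      else some (synchProd K L)
  | some K, none => if K = 0 then some 0 else none
  | none, some L => if L = 0 then some 0 else none
  | none, none => none

/-- The unique letter `{s}` of the one-letter alphabet. -/
def sLetter : Letter Unit := ⟨Set.univ, ⟨(), trivial⟩⟩

/-- The singleton language `{{s}}`: the one-letter word whose letter is `{s}`. -/
noncomputable def sLang : CModel := some ({[sLetter]} : Language (Letter Unit))

lemma sLetter_union : sLetter ∪ sLetter = sLetter := by
  apply Subtype.ext
  show Set.univ ∪ Set.univ = Set.univ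
  simp

lemma S_ne_zero : ({[sLetter]} : Language (Letter Unit)) ≠ 0 := by
  intro h
  have : [sLetter] ∈ ({[sLetter]} : Language (Letter Unit)) := rfl
  rw [h] at this
  exact this

lemma prepend_mul (M : Language (Letter Unit)) :
    ({[sLetter]} : Language (Letter Unit)) * M = (List.cons sLetter) '' M := by
  ext x
  simp only [Language.mem_mul, Set.mem_image]
  constructor
  · rintro ⟨a, ha, b, hb, rfl⟩
    have : a = [sLetter] := ha
    subst this
    exact ⟨b, hb, rfl⟩
  · rintro ⟨b, hb, rfl⟩
    exact ⟨[sLetter], rfl, b, hb, rfl⟩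

lemma prepend_zero_iff (M : Language (Letter Unit)) :
    ({[sLetter]} : Language (Letter Unit)) * M = 0 ↔ M = 0 := by
  rw [prepend_mul]
  show (List.cons sLetter) '' (M : Set _) = (∅ : Set _) ↔ M = 0
  refine (Set.image_eq_empty (s := (M : Set (List (Letter Unit))))).trans ?_
  rfl

lemma prepend_infinite_iff (M : Language (Letter Unit)) :
    (({[sLetter]} : Language (Letter Unit)) * M : Set _).Infinite ↔ (M : Set _).Infinite := by
  rw [prepend_mul]
  exact Set.infinite_image_iff ((List.cons_injective).injOn)

lemma sync_cons (u v : List (Letter Unit)) :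
    sync (sLetter :: u) (sLetter :: v) = sLetter :: sync u v := by
  show (sLetter ∪ sLetter) :: sync u v = _
  rw [sLetter_union]

lemma synchProd_prepend (K L : Language (Letter Unit)) :
    synchProd (({[sLetter]} : Language (Letter Unit)) * K)
      (({[sLetter]} : Language (Letter Unit)) * L)
      = ({[sLetter]} : Language (Letter Unit)) * synchProd K L := by
  rw [prepend_mul, prepend_mul, prepend_mul]
  ext w
  simp only [synchProd, Set.mem_image, Set.mem_setOf_eq]
  constructor
  · rintro ⟨u, ⟨u', hu', rfl⟩, v, ⟨v', hv', rfl⟩, rfl⟩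
    exact ⟨sync u' v', ⟨u', hu', v', hv', rfl⟩, (sync_cons u' v').symm⟩
  · rintro ⟨w', ⟨u', hu', v', hv', rfl⟩, rfl⟩
    exact ⟨sLetter :: u', ⟨u', hu', rfl⟩, sLetter :: v', ⟨v', hv', rfl⟩,
      (sync_cons u' v').symm⟩

lemma cSync_sLang_sLang : cSync sLang sLang = sLang := by
  show cSync (some _) (some _) = _
  rw [cSync]
  rw [if_neg (by simp [S_ne_zero]), if_neg]
  · congr 1
    ext w
    simp only [synchProd, Set.mem_setOf_eq]
    constructor
    · rintro ⟨u, hu, v, hv, rfl⟩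
      have hu' : u = [sLetter] := hu
      have hv' : v = [sLetter] := hv
      subst hu'; subst hv'
      show sync [sLetter] [sLetter] ∈ ({[sLetter]} : Language (Letter Unit))
      show sync [sLetter] [sLetter] = [sLetter]
      rw [show sync [sLetter] [sLetter] = (sLetter ∪ sLetter) :: sync [] [] from rfl,
        sLetter_union]
      rfl
    · intro hw
      have hw' : w = [sLetter] := hw
      subst hw'
      refine ⟨[sLetter], rfl, [sLetter], rfl, ?_⟩
      rw [show sync [sLetter] [sLetter] = (sLetter ∪ sLetter) :: sync [] [] from rfl,
        sLetter_union]
      rfl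
  · rintro ⟨h, -⟩
    exact h (Set.finite_singleton _)

lemma cMul_sLang_some (M : Language (Letter Unit)) :
    cMul sLang (some M) = some (({[sLetter]} : Language (Letter Unit)) * M) := rfl

lemma cMul_sLang_none : cMul sLang none = none := by
  simp [cMul, sLang, S_ne_zero]

/-- The countermodel satisfies the synchrony axiom:
`({{s}}·K) × ({{s}}·L) = ({{s}} × {{s}})·(K × L)`. -/
theorem cModel_synchrony (K L : CModel) :
    cSync (cMul sLang K) (cMul sLang L) = cMul (cSync sLang sLang) (cSync K L) := by
  rw [cSync_sLang_sLang]
  match K, L with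
  | none, none =>
    rw [cMul_sLang_none]
    show cSync none none = cMul sLang (cSync none none)
    rw [show cSync none none = none from rfl, cMul_sLang_none]
  | none, some L =>
    rw [cMul_sLang_none, cMul_sLang_some]
    show cSync none (some _) = cMul sLang (cSync none (some L))
    rw [cSync, cSync]
    by_cases hL : L = 0
    · rw [if_pos (by rw [hL]; simp), if_pos hL, cMul_sLang_some]
      simp
    · rw [if_neg (fun h => hL ((prepend_zero_iff L).mp h)), if_neg hL, cMul_sLang_none]
  | some K, none =>
    rw [cMul_sLang_none, cMul_sLang_some]
    show cSync (some _) none = cMul sLang (cSync (some K) none)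
    rw [cSync, cSync]
    by_cases hK : K = 0
    · rw [if_pos (by rw [hK]; simp), if_pos hK, cMul_sLang_some]
      simp
    · rw [if_neg (fun h => hK ((prepend_zero_iff K).mp h)), if_neg hK, cMul_sLang_none]
  | some K, some L =>
    rw [cMul_sLang_some, cMul_sLang_some]
    rw [cSync, cSync]
    by_cases h0 : K = 0 ∨ L = 0
    · rw [if_pos (h0.imp (fun h => by rw [h]; simp) (fun h => by rw [h]; simp)),
        if_pos h0, cMul_sLang_some]
      simp
    · rw [if_neg (fun h => h0 (h.imp (prepend_zero_iff K).mp (prepend_zero_iff L).mp)),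
        if_neg h0]
      by_cases hinf : K.Infinite ∧ L.Infinite
      · rw [if_pos ⟨(prepend_infinite_iff K).mpr hinf.1, (prepend_infinite_iff L).mpr hinf.2⟩,
          if_pos hinf, cMul_sLang_none]
      · rw [if_neg (fun h => hinf ⟨(prepend_infinite_iff K).mp h.1,
          (prepend_infinite_iff L).mp h.2⟩), if_neg hinf, cMul_sLang_some]
        exact congrArg some (synchProd_prepend K L)
end

section
/- The axioms of SKA (Kleene algebra plus the synchronous-product axioms) are incomplete with respect to the synchronous language semantics: there exist terms e, f with equal synchronous-language semantics such that e = f does not follow from the SKA axioms. In particular, a* × a* = a* is semantically valid but not derivable, as witnessed by a model in which it fails. -/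
open Computability

/-- Semilattice terms over the alphabet `σ`. -/
inductive SL (σ : Type*)
  | gen (a : σ)
  | prod (e f : SL σ)

/-- Interpretation of a semilattice term as a letter (a nonempty subset of `σ`). -/
def SL.sem {σ : Type*} : SL σ → Letter σ
  | .gen a => ⟨{a}, Set.singleton_nonempty a⟩
  | .prod e f => e.sem ∪ f.sem

/-- The congruence on semilattice terms generated by idempotence, commutativity
and associativity of `×`. -/
inductive SLEq {σ : Type*} : SL σ → SL σ → Prop
  | refl (e : SL σ) : SLEq e e
  | symm {e f : SL σ} : SLEq e f → SLEq f e
  | trans {e f g : SL σ} : SLEq e f → SLEq f g → SLEq e g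
  | prod_congr {e e' f f' : SL σ} :
      SLEq e e' → SLEq f f' → SLEq (e.prod f) (e'.prod f')
  | idem (e : SL σ) : SLEq (e.prod e) e
  | comm (e f : SL σ) : SLEq (e.prod f) (f.prod e)
  | assoc (e f g : SL σ) : SLEq (e.prod (f.prod g)) ((e.prod f).prod g)

/-- Synchronous regular terms. -/
inductive SKATerm (σ : Type*)
  | zero
  | one
  | atom (a : SL σ)
  | add (e f : SKATerm σ)
  | mul (e f : SKATerm σ)
  | sprod (e f : SKATerm σ)
  | star (e : SKATerm σ)

/-- The smallest congruence on synchronous regular terms generated by the SKA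
axioms: the Kleene algebra axioms of Kozen (including the least-fixpoint rules)
together with the synchronous-product axioms of Prisacariu. -/
inductive SKAEq {σ : Type*} : SKATerm σ → SKATerm σ → Prop
  | refl (e : SKATerm σ) : SKAEq e e
  | symm {e f : SKATerm σ} : SKAEq e f → SKAEq f e
  | trans {e f g : SKATerm σ} : SKAEq e f → SKAEq f g → SKAEq e g
  | add_congr {e e' f f' : SKATerm σ} :
      SKAEq e e' → SKAEq f f' → SKAEq (e.add f) (e'.add f')
  | mul_congr {e e' f f' : SKATerm σ} :
      SKAEq e e' → SKAEq f f' → SKAEq (e.mul f) (e'.mul f')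
  | sprod_congr {e e' f f' : SKATerm σ} :
      SKAEq e e' → SKAEq f f' → SKAEq (e.sprod f) (e'.sprod f')
  | star_congr {e f : SKATerm σ} : SKAEq e f → SKAEq e.star f.star
  | add_assoc (e f g : SKATerm σ) : SKAEq (e.add (f.add g)) ((e.add f).add g)
  | add_comm (e f : SKATerm σ) : SKAEq (e.add f) (f.add e)
  | add_zero (e : SKATerm σ) : SKAEq (e.add .zero) e
  | add_idem (e : SKATerm σ) : SKAEq (e.add e) e
  | mul_one (e : SKATerm σ) : SKAEq (e.mul .one) e
  | one_mul (e : SKATerm σ) : SKAEq (SKATerm.one.mul e) e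
  | mul_zero (e : SKATerm σ) : SKAEq (e.mul .zero) .zero
  | zero_mul (e : SKATerm σ) : SKAEq (SKATerm.zero.mul e) .zero
  | mul_assoc (e f g : SKATerm σ) : SKAEq (e.mul (f.mul g)) ((e.mul f).mul g)
  | right_distrib (e f g : SKATerm σ) :
      SKAEq ((e.add f).mul g) ((e.mul g).add (f.mul g))
  | left_distrib (e f g : SKATerm σ) :
      SKAEq (e.mul (f.add g)) ((e.mul f).add (e.mul g))
  | star_unfold_left (e : SKATerm σ) : SKAEq e.star (SKATerm.one.add (e.mul e.star))
  | star_unfold_right (e : SKATerm σ) : SKAEq e.star (SKATerm.one.add (e.star.mul e))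
  /-- `e + f·g ≤ g → f∗·e ≤ g`, where `x ≤ y` abbreviates `x + y ≡ y`. -/
  | lfp_left {e f g : SKATerm σ} :
      SKAEq ((e.add (f.mul g)).add g) g → SKAEq ((f.star.mul e).add g) g
  /-- `e + f·g ≤ f → e·g∗ ≤ f`. -/
  | lfp_right {e f g : SKATerm σ} :
      SKAEq ((e.add (f.mul g)).add f) f → SKAEq ((e.mul g.star).add f) f
  | sprod_assoc (e f g : SKATerm σ) :
      SKAEq (e.sprod (f.sprod g)) ((e.sprod f).sprod g)
  | sprod_comm (e f : SKATerm σ) : SKAEq (e.sprod f) (f.sprod e)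
  | sprod_distrib (e f g : SKATerm σ) :
      SKAEq (e.sprod (f.add g)) ((e.sprod f).add (e.sprod g))
  | sprod_zero (e : SKATerm σ) : SKAEq (e.sprod .zero) .zero
  | sprod_one (e : SKATerm σ) : SKAEq (e.sprod .one) e
  /-- The synchrony law `(α·e)×(β·f) = (α×β)·(e×f)` for semilattice elements. -/
  | synchrony (a b : SL σ) (e f : SKATerm σ) :
      SKAEq (((SKATerm.atom a).mul e).sprod ((SKATerm.atom b).mul f))
            (((SKATerm.atom a).sprod (SKATerm.atom b)).mul (e.sprod f))
  /-- The synchronous product of semilattice elements is again a semilattice element. -/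
  | atom_fold (a b : SL σ) :
      SKAEq ((SKATerm.atom a).sprod (SKATerm.atom b)) (SKATerm.atom (a.prod b))
  /-- `(S, ×)` is a semilattice: provably equal semilattice terms are equated. -/
  | atom_congr {a b : SL σ} : SLEq a b → SKAEq (SKATerm.atom a) (SKATerm.atom b)

/-- The synchronous-language semantics of synchronous regular terms. -/
def semSKA {σ : Type*} : SKATerm σ → Language (Letter σ)
  | .zero => 0
  | .one => 1
  | .atom a => {[a.sem]}
  | .add e f => semSKA e + semSKA f
  | .mul e f => semSKA e * semSKA f
  | .sprod e f => synchProd (semSKA e) (semSKA f)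
  | .star e => (semSKA e)∗

namespace SKAux

variable {σ : Type*}

lemma sync_nil_left (v : List (Letter σ)) : sync [] v = v := by cases v <;> rfl
lemma sync_nil_right (u : List (Letter σ)) : sync u [] = u := by cases u <;> rfl
lemma sync_cons (x y : Letter σ) (u v : List (Letter σ)) :
    sync (x :: u) (y :: v) = (x ∪ y) :: sync u v := rfl

lemma Letter.union_comm (x y : Letter σ) : x ∪ y = y ∪ x :=
  Subtype.ext (Set.union_comm x.1 y.1)

lemma Letter.union_assoc (x y z : Letter σ) : x ∪ (y ∪ z) = (x ∪ y) ∪ z :=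
  Subtype.ext (Set.union_assoc x.1 y.1 z.1).symm

lemma sync_comm : ∀ u v : List (Letter σ), sync u v = sync v u
  | [], v => by rw [sync_nil_left, sync_nil_right]
  | x :: u, [] => by rw [sync_nil_left, sync_nil_right]
  | x :: u, y :: v => by
      rw [sync_cons, sync_cons, sync_comm u v, Letter.union_comm]

lemma sync_assoc : ∀ u v w : List (Letter σ), sync (sync u v) w = sync u (sync v w)
  | [], v, w => by rw [sync_nil_left, sync_nil_left]
  | x :: u, [], w => by rw [sync_nil_right, sync_nil_left]
  | x :: u, y :: v, [] => by rw [sync_nil_right, sync_nil_right]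
  | x :: u, y :: v, z :: w => by
      rw [sync_cons, sync_cons, sync_cons, sync_cons, sync_assoc u v w,
        Letter.union_assoc]

lemma sync_length : ∀ u v : List (Letter σ), (sync u v).length = max u.length v.length
  | [], v => by rw [sync_nil_left]; simp
  | x :: u, [] => by rw [sync_nil_right]; simp
  | x :: u, y :: v => by
      rw [sync_cons]
      simp only [List.length_cons, sync_length u v]
      omega

lemma mem_synchProd {K L : Language (Letter σ)} {w : List (Letter σ)} :
    w ∈ synchProd K L ↔ ∃ u ∈ K, ∃ v ∈ L, w = sync u v := Iff.rfl

lemma synchProd_comm (K L : Language (Letter σ)) : synchProd K L = synchProd L K := by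
  ext w
  simp only [mem_synchProd]
  constructor
  · rintro ⟨u, hu, v, hv, rfl⟩; exact ⟨v, hv, u, hu, sync_comm u v⟩
  · rintro ⟨u, hu, v, hv, rfl⟩; exact ⟨v, hv, u, hu, sync_comm u v⟩

lemma synchProd_assoc (K L M : Language (Letter σ)) :
    synchProd K (synchProd L M) = synchProd (synchProd K L) M := by
  ext w
  simp only [mem_synchProd]
  constructor
  · rintro ⟨u, hu, -, ⟨v, hv, t, ht, rfl⟩, rfl⟩
    exact ⟨_, ⟨u, hu, v, hv, rfl⟩, t, ht, (sync_assoc u v t).symm⟩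
  · rintro ⟨-, ⟨u, hu, v, hv, rfl⟩, t, ht, rfl⟩
    exact ⟨u, hu, _, ⟨v, hv, t, ht, rfl⟩, sync_assoc u v t⟩

lemma synchProd_add (K L M : Language (Letter σ)) :
    synchProd K (L + M) = synchProd K L + synchProd K M := by
  ext w
  simp only [mem_synchProd, Language.mem_add]
  constructor
  · rintro ⟨u, hu, v, hv | hv, rfl⟩
    · exact Or.inl ⟨u, hu, v, hv, rfl⟩
    · exact Or.inr ⟨u, hu, v, hv, rfl⟩
  · rintro (⟨u, hu, v, hv, rfl⟩ | ⟨u, hu, v, hv, rfl⟩)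
    · exact ⟨u, hu, v, Or.inl hv, rfl⟩
    · exact ⟨u, hu, v, Or.inr hv, rfl⟩

lemma synchProd_one (K : Language (Letter σ)) : synchProd K 1 = K := by
  ext w
  simp only [mem_synchProd, Language.mem_one]
  constructor
  · rintro ⟨u, hu, v, rfl, rfl⟩; rwa [sync_nil_right]
  · intro hw; exact ⟨w, hw, [], rfl, (sync_nil_right w).symm⟩

lemma synchProd_eq_image2 (K L : Language (Letter σ)) :
    synchProd K L = Set.image2 sync K L := by
  ext w
  simp only [mem_synchProd, Set.mem_image2]
  constructor
  · rintro ⟨u, hu, v, hv, rfl⟩; exact ⟨u, hu, v, hv, rfl⟩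
  · rintro ⟨u, hu, v, hv, rfl⟩; exact ⟨u, hu, v, hv, rfl⟩

lemma synchProd_eq_zero_iff {K L : Language (Letter σ)} :
    synchProd K L = 0 ↔ K = 0 ∨ L = 0 := by
  rw [synchProd_eq_image2, Language.zero_def]
  exact Set.image2_eq_empty_iff

lemma mem_singleton_mul {x : Letter σ} {K : Language (Letter σ)} {w : List (Letter σ)} :
    w ∈ ({[x]} : Language (Letter σ)) * K ↔ ∃ v ∈ K, w = x :: v := by
  rw [Language.mem_mul]
  constructor
  · rintro ⟨a, ha, b, hb, rfl⟩
    change a = [x] at ha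
    subst ha
    exact ⟨b, hb, rfl⟩
  · rintro ⟨v, hv, rfl⟩
    exact ⟨[x], rfl, v, hv, rfl⟩

lemma singleton_mul_eq_image (x : Letter σ) (K : Language (Letter σ)) :
    ({[x]} : Language (Letter σ)) * K = (List.cons x) '' K := by
  ext w
  rw [mem_singleton_mul]
  constructor
  · rintro ⟨v, hv, rfl⟩; exact ⟨v, hv, rfl⟩
  · rintro ⟨v, hv, rfl⟩; exact ⟨v, hv, rfl⟩

lemma synchProd_consMul (x y : Letter σ) (K L : Language (Letter σ)) :
    synchProd (({[x]} : Language (Letter σ)) * K) (({[y]} : Language (Letter σ)) * L)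
      = ({[x ∪ y]} : Language (Letter σ)) * synchProd K L := by
  ext w
  rw [mem_synchProd, mem_singleton_mul]
  constructor
  · rintro ⟨u', hu', v', hv', rfl⟩
    rw [mem_singleton_mul] at hu' hv'
    obtain ⟨u, hu, rfl⟩ := hu'
    obtain ⟨v, hv, rfl⟩ := hv'
    exact ⟨sync u v, ⟨u, hu, v, hv, rfl⟩, rfl⟩
  · rintro ⟨t, ⟨u, hu, v, hv, rfl⟩, rfl⟩
    exact ⟨x :: u, mem_singleton_mul.2 ⟨u, hu, rfl⟩,
      y :: v, mem_singleton_mul.2 ⟨v, hv, rfl⟩, rfl⟩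

lemma synchProd_singleton (x y : Letter σ) :
    synchProd ({[x]} : Language (Letter σ)) {[y]} = ({[x ∪ y]} : Language (Letter σ)) := by
  ext w
  rw [mem_synchProd]
  constructor
  · rintro ⟨u, rfl, v, rfl, rfl⟩; rfl
  · rintro rfl; exact ⟨[x], rfl, [y], rfl, rfl⟩

/-! ### Unit alphabet -/

instance : Subsingleton (Letter Unit) := by
  constructor
  rintro ⟨A, x, hx⟩ ⟨B, y, hy⟩
  refine Subtype.ext ?_
  ext z
  cases z; cases x; cases y
  exact ⟨fun _ => hy, fun _ => hx⟩

lemma listUnit_len_eq : ∀ {u v : List (Letter Unit)}, u.length = v.length → u = v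
  | [], [], _ => rfl
  | x :: u, y :: v, h => by
      rw [Subsingleton.elim x y, listUnit_len_eq (Nat.succ_injective h)]

lemma finite_len_le (n : ℕ) : {w : List (Letter Unit) | w.length ≤ n}.Finite := by
  have : {w : List (Letter Unit) | w.length ≤ n} = List.length ⁻¹' (Set.Iic n) := rfl
  rw [this]
  exact Set.Finite.preimage (fun a _ b _ h => listUnit_len_eq h) (Set.finite_Iic n)

lemma exists_long {K : Language (Letter Unit)} (hK : K.Infinite) (n : ℕ) :
    ∃ w ∈ K, n ≤ w.length := by
  by_contra h
  push_neg at h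
  exact hK (Set.Finite.subset (finite_len_le n) fun w hw => le_of_lt (h w hw))

lemma synchProd_infinite_left {K L : Language (Letter Unit)}
    (hK : K.Infinite) (hL : L ≠ 0) : (synchProd K L).Infinite := by
  rw [Language.zero_def] at hL
  obtain ⟨v0, hv0⟩ := Set.nonempty_iff_ne_empty.2 hL
  refine Set.Infinite.mono ?_ (hK.diff (finite_len_le v0.length))
  rintro u ⟨hu, hlen⟩
  simp only [Set.mem_setOf_eq, not_le] at hlen
  have : u = sync u v0 := listUnit_len_eq (by rw [sync_length]; omega)
  exact ⟨u, hu, v0, hv0, this⟩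

lemma synchProd_infinite_iff {K L : Language (Letter Unit)} (hK : K ≠ 0) (hL : L ≠ 0) :
    (synchProd K L).Infinite ↔ K.Infinite ∨ L.Infinite := by
  constructor
  · intro h
    by_contra hc
    push_neg at hc
    replace hc : Set.Finite K ∧ Set.Finite L := ⟨Set.not_infinite.1 hc.1, Set.not_infinite.1 hc.2⟩
    exact h (synchProd_eq_image2 K L ▸ Set.Finite.image2 _ hc.1 hc.2)
  · rintro (h | h)
    · exact synchProd_infinite_left h hL
    · exact synchProd_comm K L ▸ synchProd_infinite_left h hK

lemma replicate_mem_kstar (x : Letter Unit) (n : ℕ) :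
    List.replicate n x ∈ (({[x]} : Language (Letter Unit)))∗ := by
  have : List.replicate n x = (List.replicate n [x]).flatten := by
    induction n with
    | zero => rfl
    | succ n ih => rw [List.replicate_succ, List.replicate_succ, List.flatten_cons, ← ih]; rfl
  rw [this]
  exact Language.join_mem_kstar (by intro y hy; rw [List.eq_of_mem_replicate hy]; rfl)

lemma kstar_singleton_eq_univ (x : Letter Unit) :
    (({[x]} : Language (Letter Unit)))∗ = Set.univ := by
  refine Set.eq_univ_of_forall fun w => ?_
  have : w = List.replicate w.length x := listUnit_len_eq (by simp)
  rw [this]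
  exact replicate_mem_kstar x w.length

lemma kstar_singleton_infinite (x : Letter Unit) :
    ((({[x]} : Language (Letter Unit)))∗).Infinite := by
  rw [kstar_singleton_eq_univ]
  exact Set.infinite_of_injective_forall_mem
    (f := fun n : ℕ => List.replicate n x)
    (fun a b h => by simpa using congrArg List.length h)
    (fun n => Set.mem_univ _)

end SKAux

namespace SKAModel
open SKAux

abbrev L0 : Type := Language (Letter Unit)
abbrev A : Type := Option L0

attribute [local instance] Classical.propDecidable
attribute [-simp] add_eq_sup

noncomputable def Aadd : A → A → A
  | some K, some L => some (K + L)
  | _, _ => none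

noncomputable def Amul : A → A → A
  | some K, some L => some (K * L)
  | none, some L => if L = 0 then some 0 else none
  | some K, none => if K = 0 then some 0 else none
  | none, none => none

noncomputable def Astar : A → A
  | some K => some (K∗)
  | none => none

noncomputable def Asprod : A → A → A
  | some K, some L => if K.Infinite ∧ L.Infinite then none else some (synchProd K L)
  | none, y => if y = some 0 then some 0 else none
  | x, none => if x = some 0 then some 0 else none

def AInf : A → Prop
  | none => True
  | some K => K.Infinite

/-! ### Language facts -/

lemma one_ne_zero' : (1 : L0) ≠ 0 := fun h =>
  Language.notMem_zero [] (h ▸ Language.nil_mem_one)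

lemma mul_eq_zero' {K L : L0} : K * L = 0 ↔ K = 0 ∨ L = 0 := by
  rw [Language.mul_def, Language.zero_def]
  exact Set.image2_eq_empty_iff

lemma add_eq_zero' {K L : L0} : K + L = 0 ↔ K = 0 ∧ L = 0 := by
  rw [Language.add_def, Language.zero_def]
  exact Set.union_empty_iff

lemma add_infinite_iff {K L : L0} : (K + L).Infinite ↔ K.Infinite ∨ L.Infinite := by
  rw [Language.add_def]
  exact Set.infinite_union

lemma singleton_ne_zero (x : Letter Unit) : ({[x]} : L0) ≠ 0 :=
  fun h => Language.notMem_zero [x] (h ▸ rfl)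

lemma singleton_not_infinite (x : Letter Unit) : ¬ ({[x]} : L0).Infinite :=
  Set.not_infinite.2 (Set.finite_singleton _)

lemma singleton_mul_eq_zero_iff {x : Letter Unit} {K : L0} :
    ({[x]} : L0) * K = 0 ↔ K = 0 := by
  simp [mul_eq_zero', singleton_ne_zero x]

lemma singleton_mul_infinite_iff {x : Letter Unit} {K : L0} :
    (({[x]} : L0) * K).Infinite ↔ K.Infinite := by
  rw [singleton_mul_eq_image]
  exact Set.infinite_image_iff (List.cons_injective.injOn)

/-! ### Aadd lemmas -/

lemma Aadd_none_left (x : A) : Aadd none x = none := by cases x <;> rfl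
lemma Aadd_none_right (x : A) : Aadd x none = none := by cases x <;> rfl

lemma Aadd_assoc (x y z : A) : Aadd x (Aadd y z) = Aadd (Aadd x y) z := by
  cases x <;> cases y <;> cases z <;> simp [Aadd, _root_.add_assoc]

lemma Aadd_comm (x y : A) : Aadd x y = Aadd y x := by
  cases x <;> cases y <;> simp [Aadd, _root_.add_comm]

lemma Aadd_zero (x : A) : Aadd x (some 0) = x := by
  cases x <;> simp [Aadd]

lemma Aadd_idem (x : A) : Aadd x x = x := by
  cases x <;> simp [Aadd, add_idem]

lemma Aadd_eq_zero_iff {x y : A} : Aadd x y = some 0 ↔ x = some 0 ∧ y = some 0 := by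
  cases x <;> cases y <;> simp [Aadd, add_eq_zero']

lemma Aadd_eq_none_iff {x y : A} : Aadd x y = none ↔ x = none ∨ y = none := by
  cases x <;> cases y <;> simp [Aadd]

/-! ### Amul lemmas -/

lemma Amul_zero (x : A) : Amul x (some 0) = some 0 := by
  cases x <;> simp [Amul]

lemma Amul_zero' (x : A) : Amul (some 0) x = some 0 := by
  cases x <;> simp [Amul]

lemma Amul_one (x : A) : Amul x (some 1) = x := by
  cases x <;> simp [Amul, one_ne_zero']

lemma Amul_one' (x : A) : Amul (some 1) x = x := by
  cases x <;> simp [Amul, one_ne_zero']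

lemma Amul_eq_zero_iff {x y : A} : Amul x y = some 0 ↔ x = some 0 ∨ y = some 0 := by
  cases x <;> cases y <;> simp only [Amul] <;> (try split_ifs) <;>
    simp_all [mul_eq_zero']

lemma Amul_eq_none_iff {x y : A} :
    Amul x y = none ↔ (x ≠ some 0 ∧ y ≠ some 0) ∧ (x = none ∨ y = none) := by
  cases x <;> cases y <;> simp only [Amul] <;> (try split_ifs) <;> simp_all

lemma Amul_assoc (x y z : A) : Amul x (Amul y z) = Amul (Amul x y) z := by
  cases x <;> cases y <;> cases z <;>
    simp only [Amul] <;> (try split_ifs) <;>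
    simp_all [Amul, mul_eq_zero', _root_.mul_assoc] <;> (try split_ifs) <;> simp_all

lemma Amul_ldistrib (x y z : A) : Amul x (Aadd y z) = Aadd (Amul x y) (Amul x z) := by
  cases x <;> cases y <;> cases z <;>
    simp only [Amul, Aadd] <;> (try split_ifs) <;>
    simp_all [Amul, Aadd, add_eq_zero', _root_.left_distrib] <;> (try split_ifs) <;> simp_all

lemma Amul_rdistrib (x y z : A) : Amul (Aadd x y) z = Aadd (Amul x z) (Amul y z) := by
  cases x <;> cases y <;> cases z <;>
    simp only [Amul, Aadd] <;> (try split_ifs) <;>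
    simp_all [Amul, Aadd, add_eq_zero', _root_.right_distrib] <;> (try split_ifs) <;> simp_all

/-! ### Astar lemmas -/

lemma Astar_unfold_left (x : A) :
    Astar x = Aadd (some 1) (Amul x (Astar x)) := by
  cases x <;> simp [Astar, Amul, Aadd, Language.one_add_self_mul_kstar_eq_kstar]

lemma Astar_unfold_right (x : A) :
    Astar x = Aadd (some 1) (Amul (Astar x) x) := by
  cases x <;> simp [Astar, Amul, Aadd, Language.one_add_kstar_mul_self_eq_kstar]

lemma Alfp_left {e f g : A} (h : Aadd (Aadd e (Amul f g)) g = g) :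
    Aadd (Amul (Astar f) e) g = g := by
  cases g with
  | none => exact Aadd_none_right _
  | some G =>
    cases e with
    | none => rw [Aadd_none_left, Aadd_none_left] at h; cases h
    | some E =>
      cases f with
      | none =>
        by_cases hG : G = 0
        · subst hG
          simp only [Amul, if_pos rfl, Aadd, _root_.add_zero] at h
          have hE : E = 0 := by
            have := Option.some.inj h
            rw [add_eq_zero'] at this
            simpa using this.1
          subst hE
          simp [Astar, Amul, Aadd]
        · rw [show Amul none (some G) = none by simp [Amul, hG],
            Aadd_none_right, Aadd_none_left] at h
          cases h
      | some F =>
        simp only [Amul, Aadd, Astar] at h ⊢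
        have h' := Option.some.inj h
        congr 1
        rw [add_eq_sup, sup_eq_right] at h' ⊢
        rw [add_le_iff] at h'
        exact (mul_le_mul_right h'.1 _).trans (kstar_mul_le_self h'.2)

lemma Alfp_right {e f g : A} (h : Aadd (Aadd e (Amul f g)) f = f) :
    Aadd (Amul e (Astar g)) f = f := by
  cases f with
  | none => exact Aadd_none_right _
  | some F =>
    cases e with
    | none => rw [Aadd_none_left, Aadd_none_left] at h; cases h
    | some E =>
      cases g with
      | none =>
        by_cases hF : F = 0
        · subst hF
          simp only [Amul, if_pos rfl, Aadd, _root_.add_zero] at h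
          have hE : E = 0 := by
            have := Option.some.inj h
            rw [add_eq_zero'] at this
            simpa using this.1
          subst hE
          simp [Astar, Amul, Aadd]
        · rw [show Amul (some F) none = none by simp [Amul, hF]] at h
          rw [Aadd_none_right, Aadd_none_left] at h
          cases h
      | some G =>
        simp only [Amul, Aadd, Astar] at h ⊢
        have h' := Option.some.inj h
        congr 1
        rw [add_eq_sup, sup_eq_right] at h' ⊢
        rw [add_le_iff] at h'
        exact (mul_le_mul_left h'.1 _).trans (mul_kstar_le_self h'.2)

/-! ### Asprod lemmas -/

lemma Asprod_zero (x : A) : Asprod x (some 0) = some 0 := by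
  cases x with
  | none => simp [Asprod]
  | some K =>
    have : ¬ (K.Infinite ∧ (0 : L0).Infinite) := by
      rintro ⟨-, h⟩; exact h (Set.finite_empty)
    simp [Asprod, this, synchProd_eq_zero_iff]

lemma Asprod_zero' (x : A) : Asprod (some 0) x = some 0 := by
  cases x with
  | none => simp [Asprod]
  | some K =>
    have : ¬ ((0 : L0).Infinite ∧ K.Infinite) := by
      rintro ⟨h, -⟩; exact h (Set.finite_empty)
    simp [Asprod, this, synchProd_eq_zero_iff]

lemma Asprod_eq_zero_iff {x y : A} : Asprod x y = some 0 ↔ x = some 0 ∨ y = some 0 := by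
  cases x with
  | none =>
    cases y <;> simp only [Asprod] <;> (try split_ifs) <;> simp_all
  | some K =>
    cases y with
    | none => simp only [Asprod] <;> (try split_ifs) <;> simp_all
    | some L =>
      simp only [Asprod]
      split_ifs with h
      · simp only [reduceCtorEq, false_iff]
        rintro (h1 | h1) <;> rw [Option.some.injEq] at h1 <;> subst h1
        · exact h.1 Set.finite_empty
        · exact h.2 Set.finite_empty
      · simp [synchProd_eq_zero_iff]

lemma AInf_none : AInf none := trivial

lemma AInf_of_none {x : A} (h : x = none) : AInf x := h ▸ trivial

lemma Asprod_eq_none_iff {x y : A} :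
    Asprod x y = none ↔
      (x ≠ some 0 ∧ y ≠ some 0) ∧ (x = none ∨ y = none ∨ (AInf x ∧ AInf y)) := by
  cases x with
  | none =>
    cases y <;> simp only [Asprod, AInf] <;> (try split_ifs) <;> simp_all
  | some K =>
    cases y with
    | none => simp only [Asprod, AInf] <;> (try split_ifs) <;> simp_all
    | some L =>
      simp only [Asprod, AInf]
      split_ifs with h
      · simp only [true_iff]
        exact ⟨⟨fun h1 => (Option.some.inj h1 ▸ h.1) Set.finite_empty,
          fun h1 => (Option.some.inj h1 ▸ h.2) Set.finite_empty⟩,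
          Or.inr (Or.inr h)⟩
      · simp_all

lemma AInf_Asprod {x y : A} (hx : x ≠ some 0) (hy : y ≠ some 0) :
    AInf (Asprod x y) ↔ AInf x ∨ AInf y := by
  cases x with
  | none => simp only [Asprod, if_neg hy, AInf, true_iff]; exact Or.inl trivial
  | some K =>
    cases y with
    | none =>
      simp only [Asprod, if_neg hx, AInf, true_iff]; exact Or.inr trivial
    | some L =>
      have hK : K ≠ 0 := fun h => hx (by rw [h])
      have hL : L ≠ 0 := fun h => hy (by rw [h])
      simp only [Asprod, AInf]
      split_ifs with h
      · simp only [AInf, true_iff]; exact Or.inl h.1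
      · exact synchProd_infinite_iff hK hL

lemma Asprod_comm (x y : A) : Asprod x y = Asprod y x := by
  cases x <;> cases y <;>
    simp only [Asprod] <;> (try split_ifs) <;>
    simp_all [synchProd_comm, And.comm]

lemma Asprod_one (x : A) : Asprod x (some 1) = x := by
  cases x with
  | none => simp [Asprod, one_ne_zero']
  | some K =>
    have : ¬ (K.Infinite ∧ (1 : L0).Infinite) := by
      rintro ⟨-, h⟩
      rw [Language.one_def] at h
      exact Set.not_infinite.2 (Set.finite_singleton _) h
    simp [Asprod, this, synchProd_one]

set_option maxHeartbeats 2000000 in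
lemma Asprod_assoc (x y z : A) : Asprod x (Asprod y z) = Asprod (Asprod x y) z := by
  by_cases hx : x = some 0
  · subst hx; rw [Asprod_zero', Asprod_zero', Asprod_zero']
  by_cases hy : y = some 0
  · subst hy; rw [Asprod_zero', Asprod_zero, Asprod_zero']
  by_cases hz : z = some 0
  · subst hz; rw [Asprod_zero, Asprod_zero, Asprod_zero]
  have hyz : Asprod y z ≠ some 0 := fun h => (Asprod_eq_zero_iff.1 h).elim hy hz
  have hxy : Asprod x y ≠ some 0 := fun h => (Asprod_eq_zero_iff.1 h).elim hx hy
  have hxa : x = none → AInf x := AInf_of_none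
  have hya : y = none → AInf y := AInf_of_none
  have hza : z = none → AInf z := AInf_of_none
  have hnone : Asprod x (Asprod y z) = none ↔ Asprod (Asprod x y) z = none := by
    simp only [Asprod_eq_none_iff, AInf_Asprod hy hz, AInf_Asprod hx hy]
    tauto
  rcases hL : Asprod x (Asprod y z) with _ | W
  · exact (hnone.1 hL).symm
  · -- some case: extract structure
    have hLn : Asprod x (Asprod y z) ≠ none := by rw [hL]; exact Option.some_ne_none W
    have hRn : Asprod (Asprod x y) z ≠ none := fun h => hLn (hnone.2 h)
    rw [← hL]
    clear hL hLn W
    -- none of x, y, z can be none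
    rcases x with _ | K
    · exfalso
      exact hRn (Asprod_eq_none_iff.2 ⟨⟨hxy, hz⟩,
        Or.inl (Asprod_eq_none_iff.2 ⟨⟨hx, hy⟩, Or.inl rfl⟩)⟩)
    rcases y with _ | L
    · exact absurd (Asprod_eq_none_iff.2 ⟨⟨hxy, hz⟩,
        Or.inl (Asprod_eq_none_iff.2 ⟨⟨hx, hy⟩, Or.inr (Or.inl rfl)⟩)⟩) hRn
    rcases z with _ | M
    · exact absurd (Asprod_eq_none_iff.2 ⟨⟨hxy, hz⟩, Or.inr (Or.inl rfl)⟩) hRn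
    have hK : K ≠ 0 := fun h => hx (by rw [h])
    have hL0 : L ≠ 0 := fun h => hy (by rw [h])
    have hM : M ≠ 0 := fun h => hz (by rw [h])
    -- deduce non-infiniteness conditions
    have hLM : ¬ (L.Infinite ∧ M.Infinite) := by
      intro h
      exact hRn (Asprod_eq_none_iff.2 ⟨⟨hxy, hz⟩, Or.inr (Or.inr
        ⟨(AInf_Asprod hx hy).2 (Or.inr h.1), h.2⟩)⟩)
    have hKL : ¬ (K.Infinite ∧ L.Infinite) := by
      intro h
      exact hRn (Asprod_eq_none_iff.2 ⟨⟨hxy, hz⟩,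
        Or.inl (Asprod_eq_none_iff.2 ⟨⟨hx, hy⟩, Or.inr (Or.inr ⟨h.1, h.2⟩)⟩)⟩)
    have hKM : ¬ (K.Infinite ∧ M.Infinite) := by
      intro h
      exact hRn (Asprod_eq_none_iff.2 ⟨⟨hxy, hz⟩, Or.inr (Or.inr
        ⟨(AInf_Asprod hx hy).2 (Or.inl h.1), h.2⟩)⟩)
    have e1 : Asprod (some L) (some M) = some (synchProd L M) := by
      simp [Asprod, hLM]
    have e2 : Asprod (some K) (some L) = some (synchProd K L) := by
      simp [Asprod, hKL]
    have e3 : ¬ (K.Infinite ∧ (synchProd L M).Infinite) := by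
      rw [synchProd_infinite_iff hL0 hM]
      rintro ⟨h1, h2 | h2⟩
      · exact hKL ⟨h1, h2⟩
      · exact hKM ⟨h1, h2⟩
    have e4 : ¬ ((synchProd K L).Infinite ∧ M.Infinite) := by
      rw [synchProd_infinite_iff hK hL0]
      rintro ⟨h1 | h1, h2⟩
      · exact hKM ⟨h1, h2⟩
      · exact hLM ⟨h1, h2⟩
    rw [e1, e2]
    simp only [Asprod, if_neg e3, if_neg e4]
    rw [synchProd_assoc]

lemma Asprod_distrib (x y z : A) :
    Asprod x (Aadd y z) = Aadd (Asprod x y) (Asprod x z) := by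
  by_cases hx : x = some 0
  · subst hx
    rw [Asprod_zero', Asprod_zero', Asprod_zero']
    rcases y with _ | L <;> rcases z with _ | M <;> simp [Aadd, Asprod]
  rcases y with _ | L
  · rw [Aadd_none_left, show Asprod x none = none by
      cases x <;> simp_all [Asprod], Aadd_none_left]
  rcases z with _ | M
  · rw [Aadd_none_right, show Asprod x none = none by
      cases x <;> simp_all [Asprod], Aadd_none_right]
  rcases x with _ | K
  · by_cases h0 : L = 0 ∧ M = 0
    · obtain ⟨rfl, rfl⟩ := h0
      simp [Aadd, Asprod, add_eq_zero']
    · have hLM : some (L + M) ≠ (some 0 : A) := fun h =>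
        h0 (add_eq_zero'.1 (Option.some.inj h))
      rw [show Aadd (some L) (some M) = some (L + M) from rfl]
      rw [show Asprod none (some (L + M)) = none by simp [Asprod, hLM]]
      rcases Classical.em (L = 0) with rfl | hL0
      · have : M ≠ 0 := by tauto
        rw [show Asprod none (some (0 : L0)) = some 0 by simp [Asprod],
          show Asprod none (some M) = none by simp [Asprod, this], Aadd_none_right]
      · rw [show Asprod none (some L) = none by simp [Asprod, hL0], Aadd_none_left]
  · rw [show Aadd (some L) (some M) = some (L + M) from rfl]
    by_cases hKi : K.Infinite
    · by_cases hLMi : L.Infinite ∨ M.Infinite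
      · have h1 : Asprod (some K) (some (L + M)) = none := by
          simp [Asprod, hKi, add_infinite_iff, hLMi]
        rw [h1]
        rcases hLMi with h | h
        · rw [show Asprod (some K) (some L) = none by simp [Asprod, hKi, h],
            Aadd_none_left]
        · rw [show Asprod (some K) (some M) = none by simp [Asprod, hKi, h],
            Aadd_none_right]
      · push_neg at hLMi
        have h1 : ¬ (K.Infinite ∧ (L + M).Infinite) := by
          rw [add_infinite_iff]; tauto
        simp only [Asprod, if_neg h1, if_neg (show ¬ (K.Infinite ∧ L.Infinite) by tauto),
          if_neg (show ¬ (K.Infinite ∧ M.Infinite) by tauto)]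
        rw [show Aadd (some (synchProd K L)) (some (synchProd K M))
            = some (synchProd K L + synchProd K M) from rfl, synchProd_add]
    · have h1 : ¬ (K.Infinite ∧ (L + M).Infinite) := by tauto
      simp only [Asprod, if_neg h1, if_neg (show ¬ (K.Infinite ∧ L.Infinite) by tauto),
        if_neg (show ¬ (K.Infinite ∧ M.Infinite) by tauto)]
      rw [show Aadd (some (synchProd K L)) (some (synchProd K M))
          = some (synchProd K L + synchProd K M) from rfl, synchProd_add]

lemma Asprod_atom (x y : Letter Unit) :
    Asprod (some ({[x]} : L0)) (some ({[y]} : L0)) = some ({[x ∪ y]} : L0) := by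
  have : ¬ (({[x]} : L0).Infinite ∧ ({[y]} : L0).Infinite) := by
    rintro ⟨h, -⟩; exact singleton_not_infinite x h
  simp [Asprod, this, synchProd_singleton]

lemma Asynchrony (ℓ : Letter Unit) (x y : A) :
    Asprod (Amul (some ({[ℓ]} : L0)) x) (Amul (some ({[ℓ]} : L0)) y)
      = Amul (Asprod (some ({[ℓ]} : L0)) (some ({[ℓ]} : L0))) (Asprod x y) := by
  rw [Asprod_atom, Subsingleton.elim (ℓ ∪ ℓ) ℓ]
  rcases x with _ | K
  · rw [show Amul (some ({[ℓ]} : L0)) none = none by simp [Amul, singleton_ne_zero]]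
    rcases y with _ | L
    · rw [show Amul (some ({[ℓ]} : L0)) none = none by simp [Amul, singleton_ne_zero]]
      rw [show Asprod (none : A) (none : A) = none from rfl,
        show Amul (some ({[ℓ]} : L0)) none = none by simp [Amul, singleton_ne_zero]]
    · by_cases hL : L = 0
      · subst hL
        rw [show Amul (some ({[ℓ]} : L0)) (some (0 : L0)) = some 0 by simp [Amul]]
        rw [show Asprod (none : A) (some (0 : L0)) = some 0 by simp [Asprod]]
        simp [Amul]
      · rw [show Amul (some ({[ℓ]} : L0)) (some L) = some ({[ℓ]} * L) from rfl]
        rw [show Asprod (none : A) (some ({[ℓ]} * L)) = none by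
          simp [Asprod, singleton_mul_eq_zero_iff, hL]]
        rw [show Asprod (none : A) (some L) = none by simp [Asprod, hL]]
        rw [show Amul (some ({[ℓ]} : L0)) none = none by simp [Amul, singleton_ne_zero]]
  · rcases y with _ | L
    · rw [show Amul (some ({[ℓ]} : L0)) none = none by simp [Amul, singleton_ne_zero]]
      by_cases hK : K = 0
      · subst hK
        rw [show Amul (some ({[ℓ]} : L0)) (some (0 : L0)) = some 0 by simp [Amul]]
        rw [show Asprod (some (0 : L0)) (none : A) = some 0 by simp [Asprod]]
        simp [Amul]
      · rw [show Amul (some ({[ℓ]} : L0)) (some K) = some ({[ℓ]} * K) from rfl]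
        rw [show Asprod (some ({[ℓ]} * K)) (none : A) = none by
          simp [Asprod, singleton_mul_eq_zero_iff, hK]]
        rw [show Asprod (some K) (none : A) = none by simp [Asprod, hK]]
        rw [show Amul (some ({[ℓ]} : L0)) none = none by simp [Amul, singleton_ne_zero]]
    · rw [show Amul (some ({[ℓ]} : L0)) (some K) = some ({[ℓ]} * K) from rfl,
        show Amul (some ({[ℓ]} : L0)) (some L) = some ({[ℓ]} * L) from rfl]
      by_cases hi : K.Infinite ∧ L.Infinite
      · rw [show Asprod (some ({[ℓ]} * K)) (some ({[ℓ]} * L)) = none by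
          simp [Asprod, singleton_mul_infinite_iff, hi.1, hi.2]]
        rw [show Asprod (some K) (some L) = none by simp [Asprod, hi.1, hi.2]]
        simp [Amul, singleton_ne_zero]
      · have hi' : ¬ ((({[ℓ]} : L0) * K).Infinite ∧ (({[ℓ]} : L0) * L).Infinite) := by
          rw [singleton_mul_infinite_iff, singleton_mul_infinite_iff]; exact hi
        simp only [Asprod, if_neg hi, if_neg hi']
        rw [synchProd_consMul, Subsingleton.elim (ℓ ∪ ℓ) ℓ]
        rfl

/-! ### The interpretation -/

noncomputable def M : SKATerm Unit → A
  | .zero => some 0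
  | .one => some 1
  | .atom a => some ({[a.sem]} : L0)
  | .add e f => Aadd (M e) (M f)
  | .mul e f => Amul (M e) (M f)
  | .sprod e f => Asprod (M e) (M f)
  | .star e => Astar (M e)

lemma M_sound {e f : SKATerm Unit} (h : SKAEq e f) : M e = M f := by
  induction h with
  | refl e => rfl
  | symm _ ih => exact ih.symm
  | trans _ _ ih1 ih2 => exact ih1.trans ih2
  | add_congr _ _ ih1 ih2 => simp only [M, ih1, ih2]
  | mul_congr _ _ ih1 ih2 => simp only [M, ih1, ih2]
  | sprod_congr _ _ ih1 ih2 => simp only [M, ih1, ih2]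
  | star_congr _ ih => simp only [M, ih]
  | add_assoc e f g => exact Aadd_assoc _ _ _
  | add_comm e f => exact Aadd_comm _ _
  | add_zero e => exact Aadd_zero _
  | add_idem e => exact Aadd_idem _
  | mul_one e => exact Amul_one _
  | one_mul e => exact Amul_one' _
  | mul_zero e => exact Amul_zero _
  | zero_mul e => exact Amul_zero' _
  | mul_assoc e f g => exact Amul_assoc _ _ _
  | right_distrib e f g => exact Amul_rdistrib _ _ _
  | left_distrib e f g => exact Amul_ldistrib _ _ _
  | star_unfold_left e => exact Astar_unfold_left _
  | star_unfold_right e => exact Astar_unfold_right _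
  | lfp_left _ ih => exact Alfp_left ih
  | lfp_right _ ih => exact Alfp_right ih
  | sprod_assoc e f g => exact Asprod_assoc _ _ _
  | sprod_comm e f => exact Asprod_comm _ _
  | sprod_distrib e f g => exact Asprod_distrib _ _ _
  | sprod_zero e => exact Asprod_zero _
  | sprod_one e => exact Asprod_one _
  | synchrony a b e f =>
      show Asprod (Amul (some {[a.sem]}) (M e)) (Amul (some {[b.sem]}) (M f))
        = Amul (Asprod (some {[a.sem]}) (some {[b.sem]})) (Asprod (M e) (M f))
      rw [Subsingleton.elim b.sem a.sem]
      exact Asynchrony _ _ _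
  | atom_fold a b =>
      show Asprod (some {[a.sem]}) (some {[b.sem]}) = some {[(a.prod b).sem]}
      rw [Asprod_atom]
      rfl
  | atom_congr h =>
      exact congrArg (fun ℓ => (some ({[ℓ]} : L0) : A)) (Subsingleton.elim _ _)

end SKAModel

/-- Incompleteness of SKA: there are synchronous regular terms with equal
synchronous-language semantics that are not provably equal from the SKA axioms.
(The witness is `a∗ × a∗` versus `a∗` over a one-letter alphabet.) -/
theorem SKA_incomplete :
    ∃ e f : SKATerm Unit, semSKA e = semSKA f ∧ ¬ SKAEq e f := by
  refine ⟨((SKATerm.atom (SL.gen ())).star).sprod ((SKATerm.atom (SL.gen ())).star),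
    (SKATerm.atom (SL.gen ())).star, ?_, ?_⟩
  · show synchProd (({[(SL.gen ()).sem]} : Language (Letter Unit))∗)
        (({[(SL.gen ()).sem]} : Language (Letter Unit))∗)
      = (({[(SL.gen ()).sem]} : Language (Letter Unit))∗)
    rw [SKAux.kstar_singleton_eq_univ]
    apply Set.eq_univ_of_forall
    intro w
    exact ⟨w, Set.mem_univ w, [], Set.mem_univ [], (SKAux.sync_nil_right w).symm⟩
  · intro h
    have hM := SKAModel.M_sound h
    have hS : ((({[(SL.gen ()).sem]} : SKAModel.L0))∗).Infinite :=
      SKAux.kstar_singleton_infinite _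
    have hL : SKAModel.M (((SKATerm.atom (SL.gen ())).star).sprod
        ((SKATerm.atom (SL.gen ())).star)) = none := by
      show SKAModel.Asprod
        (SKAModel.Astar (some ({[(SL.gen ()).sem]} : SKAModel.L0)))
        (SKAModel.Astar (some ({[(SL.gen ()).sem]} : SKAModel.L0))) = none
      show SKAModel.Asprod (some ((({[(SL.gen ()).sem]} : SKAModel.L0))∗))
        (some ((({[(SL.gen ()).sem]} : SKAModel.L0))∗)) = none
      simp only [SKAModel.Asprod]
      rw [if_pos ⟨hS, hS⟩]
    rw [hL] at hM
    have hR : SKAModel.M ((SKATerm.atom (SL.gen ())).star)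
        = some ((({[(SL.gen ()).sem]} : SKAModel.L0))∗) := rfl
    rw [hR] at hM
    cases hM
end

section
/- For every SF₁-expression e and every nonempty set A ⊆ Σ, the set of partial derivatives δ(e, A) is contained in the reach set ρ(e); moreover, if e' ∈ ρ(e) then δ(e', A) ⊆ ρ(e). -/
/-- SF₁-expressions over `σ`. -/
inductive Exp (σ : Type*)
  | zero
  | one
  | atom (a : SL σ)
  | add (e f : Exp σ)
  | mul (e f : Exp σ)
  | sprod (e f : Exp σ)
  | star (e : Exp σ)
  | h (e : Exp σ)

/-- The termination map `o`: `true` iff the expression can immediately terminate. -/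
def termMap {σ : Type*} : Exp σ → Bool
  | .zero => false
  | .one => true
  | .atom _ => false
  | .add e f => termMap e || termMap f
  | .mul e f => termMap e && termMap f
  | .sprod e f => termMap e && termMap f
  | .star _ => true
  | .h e => termMap e

open Classical in
/-- The partial-derivative (continuation) map `δ : Exp × P_n(Σ) → Pow(Exp)`. -/
noncomputable def pderiv {σ : Type*} : Exp σ → Letter σ → Set (Exp σ)
  | .zero, _ => ∅
  | .one, _ => ∅
  | .h _, _ => ∅
  | .atom a, A => if A = a.sem then {Exp.one} else ∅
  | .add e f, A => pderiv e A ∪ pderiv f A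
  | .mul e f, A =>
      {x | ∃ e' ∈ pderiv e A, x = e'.mul f} ∪
      (if termMap e then pderiv f A else ∅)
  | .star e, A => {x | ∃ e' ∈ pderiv e A, x = e'.mul e.star}
  | .sprod e f, A =>
      (if termMap f then pderiv e A else ∅) ∪
      (if termMap e then pderiv f A else ∅) ∪
      {x | ∃ B₁ B₂ : Letter σ, B₁ ∪ B₂ = A ∧
            ∃ e' ∈ pderiv e B₁, ∃ f' ∈ pderiv f B₂, x = e'.sprod f'}

/-- The reach function `ρ`. -/
def reach {σ : Type*} : Exp σ → Set (Exp σ)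
  | .zero => ∅
  | .one => {Exp.one}
  | .atom a => {Exp.one, Exp.atom a}
  | .add e f => reach e ∪ reach f
  | .mul e f => {x | ∃ e' ∈ reach e, x = e'.mul f} ∪ reach f
  | .star e => {Exp.one} ∪ {x | ∃ e' ∈ reach e, x = e'.mul e.star}
  | .sprod e f =>
      {x | ∃ e' ∈ reach e, ∃ f' ∈ reach f, x = e'.sprod f'} ∪ reach e ∪ reach f
  | .h _ => {Exp.one}

open Set

theorem reach_subset_reach_of_mem {σ : Type*} {e e' : Exp σ} (he : e' ∈ reach e) :
    reach e' ⊆ reach e := by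
  induction e generalizing e' with
  | zero => exact he.elim
  | one => rw [mem_singleton_iff.1 he]
  | h => rw [mem_singleton_iff.1 he]; rfl
  | atom a => rcases he with rfl | rfl <;> simp [reach]
  | add e f ihe ihf =>
      rcases he with he | he
      exacts [(ihe he).trans subset_union_left, (ihf he).trans subset_union_right]
  | mul e f ihe ihf =>
      rcases he with ⟨e'', he'', rfl⟩ | he
      · rintro x (⟨y, hy, rfl⟩ | hx)
        exacts [Or.inl ⟨y, ihe he'' hy, rfl⟩, Or.inr hx]
      · exact (ihf he).trans subset_union_right
  | sprod e f ihe ihf =>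
      rcases he with (⟨e'', he'', f'', hf'', rfl⟩ | he) | he
      · rintro x ((⟨y, hy, z, hz, rfl⟩ | hx) | hx)
        exacts [Or.inl (Or.inl ⟨y, ihe he'' hy, z, ihf hf'' hz, rfl⟩),
          Or.inl (Or.inr (ihe he'' hx)), Or.inr (ihf hf'' hx)]
      · exact (ihe he).trans (subset_union_right.trans subset_union_left)
      · exact (ihf he).trans subset_union_right
  | star e ihe =>
      rcases he with rfl | ⟨e'', he'', rfl⟩
      · exact subset_union_left
      · rintro x (⟨y, hy, rfl⟩ | hx)
        exacts [Or.inr ⟨y, ihe he'' hy, rfl⟩, hx]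

theorem pderiv_subset_reach {σ : Type*} (e : Exp σ) (A : Letter σ) :
    pderiv e A ⊆ reach e := by
  induction e generalizing A with
  | zero | one | h => exact empty_subset _
  | atom a =>
      unfold pderiv
      split_ifs
      exacts [singleton_subset_iff.2 (Or.inl rfl), empty_subset _]
  | add e f ihe ihf => exact union_subset_union (ihe A) (ihf A)
  | mul e f ihe ihf =>
      rintro x (⟨e', he', rfl⟩ | hx)
      · exact Or.inl ⟨e', ihe A he', rfl⟩
      · split_ifs at hx
        exacts [Or.inr (ihf A hx), hx.elim]
  | sprod e f ihe ihf =>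
      rintro x ((hx | hx) | ⟨B₁, B₂, -, e', he', f', hf', rfl⟩)
      · split_ifs at hx
        exacts [Or.inl (Or.inr (ihe A hx)), hx.elim]
      · split_ifs at hx
        exacts [Or.inr (ihf A hx), hx.elim]
      · exact Or.inl (Or.inl ⟨e', ihe B₁ he', f', ihf B₂ hf', rfl⟩)
  | star e ihe =>
      rintro x ⟨e', he', rfl⟩
      exact Or.inr ⟨e', ihe A he', rfl⟩

/-- Partial derivatives are contained in the reach set, and the reach set is
closed under taking partial derivatives. -/
theorem deriv_subset_reach {σ : Type*} (e : Exp σ) (A : Letter σ) :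
    pderiv e A ⊆ reach e ∧ ∀ e' ∈ reach e, pderiv e' A ⊆ reach e :=
  ⟨pderiv_subset_reach e A,
    fun _ he' => (pderiv_subset_reach _ A).trans (reach_subset_reach_of_mem he')⟩
end

section
/- Every guarded Q-linear system over a synchronous F₁-algebra of terms has a solution that is unique up to provable SF₁-equivalence: if M : Q × Q → Exp and p : Q → Exp with H(M(i,j)) ≡ 0 for all i, j, then there exists a Q-vector x with M·x + p ≡ x, and any two such vectors are pointwise provably equivalent. -/
/-- The smallest congruence on SF₁-expressions generated by the SF₁ axioms:
Salomaa's F₁ axioms (idempotent semiring, star unfolding, loop tightening,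
the unique fixpoint axiom and the axioms for `H`), together with the
synchronous-product axioms. -/
inductive SFEq {σ : Type*} : Exp σ → Exp σ → Prop
  | refl (e : Exp σ) : SFEq e e
  | symm {e f : Exp σ} : SFEq e f → SFEq f e
  | trans {e f g : Exp σ} : SFEq e f → SFEq f g → SFEq e g
  | add_congr {e e' f f' : Exp σ} :
      SFEq e e' → SFEq f f' → SFEq (e.add f) (e'.add f')
  | mul_congr {e e' f f' : Exp σ} :
      SFEq e e' → SFEq f f' → SFEq (e.mul f) (e'.mul f')
  | sprod_congr {e e' f f' : Exp σ} :
      SFEq e e' → SFEq f f' → SFEq (e.sprod f) (e'.sprod f')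
  | star_congr {e f : Exp σ} : SFEq e f → SFEq e.star f.star
  | h_congr {e f : Exp σ} : SFEq e f → SFEq e.h f.h
  | add_assoc (e f g : Exp σ) : SFEq (e.add (f.add g)) ((e.add f).add g)
  | add_comm (e f : Exp σ) : SFEq (e.add f) (f.add e)
  | add_zero (e : Exp σ) : SFEq (e.add .zero) e
  | add_idem (e : Exp σ) : SFEq (e.add e) e
  | mul_one (e : Exp σ) : SFEq (e.mul .one) e
  | one_mul (e : Exp σ) : SFEq (Exp.one.mul e) e
  | mul_zero (e : Exp σ) : SFEq (e.mul .zero) .zero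
  | zero_mul (e : Exp σ) : SFEq (Exp.zero.mul e) .zero
  | mul_assoc (e f g : Exp σ) : SFEq (e.mul (f.mul g)) ((e.mul f).mul g)
  | right_distrib (e f g : Exp σ) :
      SFEq ((e.add f).mul g) ((e.mul g).add (f.mul g))
  | left_distrib (e f g : Exp σ) :
      SFEq (e.mul (f.add g)) ((e.mul f).add (e.mul g))
  | star_unfold_left (e : Exp σ) : SFEq e.star (Exp.one.add (e.mul e.star))
  | star_unfold_right (e : Exp σ) : SFEq e.star (Exp.one.add (e.star.mul e))
  /-- Loop tightening: `(e + 1)∗ = e∗`. -/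
  | loop_tighten (e : Exp σ) : SFEq ((e.add .one).star) e.star
  /-- The unique fixpoint axiom: `H(f) = 0` and `e + f·g = g` imply `f∗·e = g`. -/
  | unique_fixpoint {e f g : Exp σ} :
      SFEq f.h .zero → SFEq (e.add (f.mul g)) g → SFEq (f.star.mul e) g
  | h_zero : SFEq (Exp.zero.h (σ := σ)) .zero
  | h_one : SFEq (Exp.one.h (σ := σ)) .one
  | h_add (e f : Exp σ) : SFEq ((e.add f).h) (e.h.add f.h)
  | h_mul (e f : Exp σ) : SFEq ((e.mul f).h) (e.h.mul f.h)
  | h_star (e : Exp σ) : SFEq (e.star.h) (e.h.star)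
  | h_sprod (e f : Exp σ) : SFEq ((e.sprod f).h) (e.h.sprod f.h)
  /-- `H(α) = 0` for semilattice elements `α`. -/
  | h_atom (a : SL σ) : SFEq ((Exp.atom a).h) .zero
  | sprod_assoc (e f g : Exp σ) :
      SFEq (e.sprod (f.sprod g)) ((e.sprod f).sprod g)
  | sprod_comm (e f : Exp σ) : SFEq (e.sprod f) (f.sprod e)
  | sprod_distrib (e f g : Exp σ) :
      SFEq (e.sprod (f.add g)) ((e.sprod f).add (e.sprod g))
  | sprod_zero (e : Exp σ) : SFEq (e.sprod .zero) .zero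
  | sprod_one (e : Exp σ) : SFEq (e.sprod .one) e
  /-- The synchrony law for semilattice elements. -/
  | synchrony (a b : SL σ) (e f : Exp σ) :
      SFEq (((Exp.atom a).mul e).sprod ((Exp.atom b).mul f))
           (((Exp.atom a).sprod (Exp.atom b)).mul (e.sprod f))
  | atom_fold (a b : SL σ) :
      SFEq ((Exp.atom a).sprod (Exp.atom b)) (Exp.atom (a.prod b))
  | atom_congr {a b : SL σ} : SLEq a b → SFEq (Exp.atom a) (Exp.atom b)

/-- The sum of a list of expressions. -/
def bigSum {σ : Type*} (l : List (Exp σ)) : Exp σ :=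
  l.foldr Exp.add Exp.zero

/-- `(M·x)(q) = Σ_{j ∈ Q} M(q,j)·x(j)`. -/
noncomputable def matApp {σ : Type*} {Q : Type*} [Fintype Q]
    (M : Q → Q → Exp σ) (x : Q → Exp σ) (q : Q) : Exp σ :=
  bigSum ((Finset.univ : Finset Q).toList.map fun j => (M q j).mul (x j))

/-- `x` is a solution of the linear system `(M, p)`: `M·x + p ≡ x` pointwise. -/
def IsSolution {σ : Type*} {Q : Type*} [Fintype Q]
    (M : Q → Q → Exp σ) (p : Q → Exp σ) (x : Q → Exp σ) : Prop :=
  ∀ q, SFEq ((matApp M x q).add (p q)) (x q)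

local infix:50 " ≋ " => SFEq

section Helpers

variable {σ : Type*}

instance : Trans (@SFEq σ) (@SFEq σ) (@SFEq σ) := ⟨SFEq.trans⟩

theorem SFEq.zero_add (e : Exp σ) : SFEq (Exp.zero.add e) e :=
  (SFEq.add_comm _ _).trans (SFEq.add_zero e)

theorem SFEq.addl {a a' b : Exp σ} (h : SFEq a a') : SFEq (a.add b) (a'.add b) :=
  SFEq.add_congr h (.refl b)

theorem SFEq.addr {a b b' : Exp σ} (h : SFEq b b') : SFEq (a.add b) (a.add b') :=
  SFEq.add_congr (.refl a) h

theorem SFEq.mull {a a' b : Exp σ} (h : SFEq a a') : SFEq (a.mul b) (a'.mul b) :=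
  SFEq.mul_congr h (.refl b)

theorem SFEq.mulr {a b b' : Exp σ} (h : SFEq b b') : SFEq (a.mul b) (a.mul b') :=
  SFEq.mul_congr (.refl a) h

theorem SFEq.add_left_comm (a b c : Exp σ) :
    SFEq (a.add (b.add c)) (b.add (a.add c)) := by
  calc a.add (b.add c)
      ≋ (a.add b).add c := SFEq.add_assoc _ _ _
    _ ≋ (b.add a).add c := SFEq.addl (SFEq.add_comm _ _)
    _ ≋ b.add (a.add c) := SFEq.symm (SFEq.add_assoc _ _ _)

theorem SFEq.swap4 (a b c d : Exp σ) :
    SFEq ((a.add b).add (c.add d)) ((b.add d).add (a.add c)) := by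
  have h1 : SFEq ((a.add b).add (c.add d)) (b.add (a.add (c.add d))) :=
    SFEq.trans (SFEq.addl (SFEq.add_comm _ _)) (SFEq.symm (SFEq.add_assoc _ _ _))
  have h2 : SFEq (a.add (c.add d)) (d.add (a.add c)) := by
    refine SFEq.trans (SFEq.addr (SFEq.add_comm _ _)) ?_
    exact SFEq.add_left_comm _ _ _
  exact SFEq.trans (SFEq.trans h1 (SFEq.addr h2)) (SFEq.add_assoc _ _ _)

theorem SFEq.add_add_add_comm (a b c d : Exp σ) :
    SFEq ((a.add b).add (c.add d)) ((a.add c).add (b.add d)) :=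
  SFEq.trans (SFEq.swap4 a b c d) (SFEq.add_comm _ _)

theorem bigSum_cons (e : Exp σ) (l : List (Exp σ)) :
    bigSum (e :: l) = e.add (bigSum l) := rfl

theorem bigSum_perm {l l' : List (Exp σ)} (h : l.Perm l') :
    SFEq (bigSum l) (bigSum l') := by
  induction h with
  | nil => exact .refl _
  | cons x _ ih => exact SFEq.addr ih
  | swap x y l => exact SFEq.add_left_comm _ _ _
  | trans _ _ ih1 ih2 => exact ih1.trans ih2

theorem bigSum_congr {α : Type*} {f g : α → Exp σ} (l : List α)
    (h : ∀ j ∈ l, SFEq (f j) (g j)) :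
    SFEq (bigSum (l.map f)) (bigSum (l.map g)) := by
  induction l with
  | nil => exact .refl _
  | cons a l ih =>
      exact SFEq.add_congr (h a (by simp)) (ih fun j hj => h j (by simp [hj]))

theorem mul_bigSum {α : Type*} (e : Exp σ) (f : α → Exp σ) (l : List α) :
    SFEq (e.mul (bigSum (l.map f))) (bigSum (l.map fun j => e.mul (f j))) := by
  induction l with
  | nil => exact SFEq.mul_zero e
  | cons a l ih =>
      exact SFEq.trans (SFEq.left_distrib _ _ _) (SFEq.addr ih)

theorem bigSum_add {α : Type*} (f g : α → Exp σ) (l : List α) :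
    SFEq (bigSum (l.map fun j => (f j).add (g j)))
      ((bigSum (l.map f)).add (bigSum (l.map g))) := by
  induction l with
  | nil => exact SFEq.symm (SFEq.zero_add _)
  | cons a l ih =>
      exact SFEq.trans (SFEq.addr ih) (SFEq.add_add_add_comm _ _ _ _)

theorem bigSum_split {Q : Type*} [Fintype Q] (q0 : Q)
    [Fintype {q : Q // q ≠ q0}] (g : Q → Exp σ) :
    SFEq (bigSum ((Finset.univ : Finset Q).toList.map g))
      ((g q0).add (bigSum (((Finset.univ : Finset {q : Q // q ≠ q0}).toList.map
        fun j => g j.val)))) := by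
  have hperm : (Finset.univ : Finset Q).toList.Perm
      (q0 :: (Finset.univ : Finset {q : Q // q ≠ q0}).toList.map Subtype.val) := by
    have hn1 : (Finset.univ : Finset Q).toList.Nodup := Finset.nodup_toList _
    have hn2 : (q0 :: (Finset.univ : Finset {q : Q // q ≠ q0}).toList.map
        Subtype.val).Nodup := by
      refine List.Nodup.cons ?_ ((Finset.nodup_toList _).map Subtype.val_injective)
      intro hmem
      rcases List.mem_map.mp hmem with ⟨j, _, hj⟩
      exact j.prop hj
    refine (List.perm_ext_iff_of_nodup hn1 hn2).mpr ?_
    intro q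
    simp only [Finset.mem_toList, Finset.mem_univ, true_iff, List.mem_cons,
      List.mem_map]
    by_cases h : q = q0
    · exact Or.inl h
    · exact Or.inr ⟨⟨q, h⟩, by simp⟩
  have := bigSum_perm (hperm.map g)
  simpa [List.map_map, Function.comp, bigSum_cons] using this

/-- `e + a·(a⋆·e) ≋ a⋆·e`: the unfolding direction of Arden's rule. -/
theorem star_fix (a e : Exp σ) :
    SFEq (e.add (a.mul (a.star.mul e))) (a.star.mul e) := by
  refine SFEq.symm ?_
  calc a.star.mul e
      ≋ (Exp.one.add (a.mul a.star)).mul e :=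
        SFEq.mull (SFEq.star_unfold_left a)
    _ ≋ (Exp.one.mul e).add ((a.mul a.star).mul e) := SFEq.right_distrib _ _ _
    _ ≋ e.add ((a.mul a.star).mul e) := SFEq.addl (SFEq.one_mul e)
    _ ≋ e.add (a.mul (a.star.mul e)) := SFEq.addr (SFEq.symm (SFEq.mul_assoc _ _ _))

end Helpers

section Main

universe u v

theorem guarded_main {σ : Type u} : ∀ (n : ℕ) (Q : Type v) [Fintype Q]
    (M : Q → Q → Exp σ) (p : Q → Exp σ), Fintype.card Q = n →
    (∀ i j, SFEq ((M i j).h) Exp.zero) →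
    ∃ x : Q → Exp σ, IsSolution M p x ∧
      ∀ y : Q → Exp σ, IsSolution M p y → ∀ q, SFEq (x q) (y q) := by
  intro n
  induction n with
  | zero =>
      intro Q instQ M p hcard _
      haveI : IsEmpty Q := Fintype.card_eq_zero_iff.mp hcard
      exact ⟨fun _ => Exp.zero, fun q => isEmptyElim q, fun y _ q => isEmptyElim q⟩
  | succ n ih =>
      intro Q instQ M p hcard hM
      classical
      obtain ⟨q0⟩ : Nonempty Q := Fintype.card_pos_iff.mp (by omega)
      set a : Exp σ := M q0 q0 with ha
      set Q' := {q : Q // q ≠ q0} with hQ'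
      -- the sum over Q' appearing in the q0-equation, for a vector x on Q
      set Sig : (Q → Exp σ) → Exp σ := fun x =>
        bigSum ((Finset.univ : Finset Q').toList.map
          fun j => (M q0 j.val).mul (x j.val)) with hSig
      set E : (Q → Exp σ) → Exp σ := fun x => (Sig x).add (p q0) with hE
      set M' : Q' → Q' → Exp σ := fun i j =>
        (M i.val j.val).add ((M i.val q0).mul (a.star.mul (M q0 j.val))) with hM'
      set p' : Q' → Exp σ := fun i =>
        (p i.val).add ((M i.val q0).mul (a.star.mul (p q0))) with hp'
      -- guardedness of the reduced system
      have hM'g : ∀ i j : Q', SFEq ((M' i j).h) Exp.zero := by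
        intro i j
        calc (M' i j).h
            ≋ ((M i.val j.val).h).add
                (((M i.val q0).mul (a.star.mul (M q0 j.val))).h) :=
              SFEq.h_add _ _
          _ ≋ Exp.zero.add (((M i.val q0).h).mul ((a.star.mul (M q0 j.val)).h)) :=
              SFEq.add_congr (hM i.val j.val) (SFEq.h_mul _ _)
          _ ≋ Exp.zero.add (((M i.val q0).h).mul
                ((a.star.h).mul ((M q0 j.val).h))) :=
              SFEq.addr (SFEq.mulr (SFEq.h_mul _ _))
          _ ≋ Exp.zero.add (((M i.val q0).h).mul ((a.star.h).mul Exp.zero)) :=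
              SFEq.addr (SFEq.mulr (SFEq.mulr (hM q0 j.val)))
          _ ≋ Exp.zero.add (((M i.val q0).h).mul Exp.zero) :=
              SFEq.addr (SFEq.mulr (SFEq.mul_zero _))
          _ ≋ Exp.zero.add Exp.zero := SFEq.addr (SFEq.mul_zero _)
          _ ≋ Exp.zero := SFEq.add_zero _
      have hcard' : Fintype.card Q' = n := by
        have h1 : Fintype.card {q : Q // ¬ q = q0} =
            Fintype.card Q - Fintype.card {q : Q // q = q0} :=
          Fintype.card_subtype_compl _
        have h2 : Fintype.card {q : Q // q = q0} = 1 := Fintype.card_subtype_eq q0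
        have h3 : Fintype.card Q' = Fintype.card {q : Q // ¬ q = q0} :=
          Fintype.card_congr (Equiv.refl _)
        omega
      -- the key substitution lemma
      have key : ∀ (x : Q → Exp σ), SFEq (x q0) (a.star.mul (E x)) →
          ∀ i : Q', SFEq ((matApp M' (fun j => x j.val) i).add (p' i))
            ((matApp M x i.val).add (p i.val)) := by
        intro x hx i
        set l := (Finset.univ : Finset Q').toList with hl
        set A : Q' → Exp σ := fun j => (M i.val j.val).mul (x j.val) with hA
        set B : Q' → Exp σ := fun j =>
          (M i.val q0).mul (a.star.mul ((M q0 j.val).mul (x j.val))) with hB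
        have step1 : SFEq (matApp M' (fun j => x j.val) i)
            (bigSum (l.map fun j => (A j).add (B j))) := by
          refine bigSum_congr l ?_
          intro j _
          calc (M' i j).mul (x j.val)
              ≋ ((M i.val j.val).mul (x j.val)).add
                  (((M i.val q0).mul (a.star.mul (M q0 j.val))).mul (x j.val)) :=
                SFEq.right_distrib _ _ _
            _ ≋ (A j).add ((M i.val q0).mul
                  ((a.star.mul (M q0 j.val)).mul (x j.val))) :=
                SFEq.addr (SFEq.symm (SFEq.mul_assoc _ _ _))
            _ ≋ (A j).add (B j) :=
                SFEq.addr (SFEq.mulr (SFEq.symm (SFEq.mul_assoc _ _ _)))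
        have step3 : SFEq ((M i.val q0).mul (a.star.mul (Sig x)))
            (bigSum (l.map B)) := by
          calc (M i.val q0).mul (a.star.mul (Sig x))
              ≋ (M i.val q0).mul (bigSum (l.map
                  fun j => a.star.mul ((M q0 j.val).mul (x j.val)))) :=
                SFEq.mulr (mul_bigSum _ _ _)
            _ ≋ bigSum (l.map B) := mul_bigSum _ _ _
        calc (matApp M' (fun j => x j.val) i).add (p' i)
            ≋ (bigSum (l.map fun j => (A j).add (B j))).add (p' i) :=
              SFEq.addl step1
          _ ≋ ((bigSum (l.map A)).add (bigSum (l.map B))).add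
                ((p i.val).add ((M i.val q0).mul (a.star.mul (p q0)))) :=
              SFEq.addl (bigSum_add _ _ _)
          _ ≋ ((bigSum (l.map A)).add ((M i.val q0).mul (a.star.mul (Sig x)))).add
                ((p i.val).add ((M i.val q0).mul (a.star.mul (p q0)))) :=
              SFEq.addl (SFEq.addr (SFEq.symm step3))
          _ ≋ (((M i.val q0).mul (a.star.mul (Sig x))).add
                ((M i.val q0).mul (a.star.mul (p q0)))).add
                ((bigSum (l.map A)).add (p i.val)) :=
              SFEq.swap4 _ _ _ _
          _ ≋ ((M i.val q0).mul ((a.star.mul (Sig x)).add (a.star.mul (p q0)))).add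
                ((bigSum (l.map A)).add (p i.val)) :=
              SFEq.addl (SFEq.symm (SFEq.left_distrib _ _ _))
          _ ≋ ((M i.val q0).mul (a.star.mul (E x))).add
                ((bigSum (l.map A)).add (p i.val)) :=
              SFEq.addl (SFEq.mulr (SFEq.symm (SFEq.left_distrib _ _ _)))
          _ ≋ ((M i.val q0).mul (x q0)).add ((bigSum (l.map A)).add (p i.val)) :=
              SFEq.addl (SFEq.mulr (SFEq.symm hx))
          _ ≋ (((M i.val q0).mul (x q0)).add (bigSum (l.map A))).add (p i.val) :=
              SFEq.add_assoc _ _ _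
          _ ≋ (matApp M x i.val).add (p i.val) :=
              SFEq.addl (SFEq.symm (bigSum_split q0 fun q => (M i.val q).mul (x q)))
      -- solve the reduced system
      obtain ⟨x', hx'sol, hx'uniq⟩ := ih Q' M' p' hcard' hM'g
      set e0 : Exp σ := (bigSum ((Finset.univ : Finset Q').toList.map
        fun j => (M q0 j.val).mul (x' j))).add (p q0) with he0
      set x : Q → Exp σ := fun q =>
        if h : q = q0 then a.star.mul e0 else x' ⟨q, h⟩ with hx
      have hxrestr : (fun j : Q' => x j.val) = x' := by
        funext j
        simp only [hx]
        rw [dif_neg j.prop]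
      have hxq0 : x q0 = a.star.mul e0 := by
        show (if h : q0 = q0 then a.star.mul e0 else x' ⟨q0, h⟩) = a.star.mul e0
        exact dif_pos rfl
      have hfun : (fun j : Q' => (M q0 j.val).mul (x j.val)) =
          (fun j : Q' => (M q0 j.val).mul (x' j)) := by
        rw [← hxrestr]
      have hEx : E x = e0 := by
        show (bigSum (((Finset.univ : Finset Q').toList).map
          (fun j : Q' => (M q0 j.val).mul (x j.val)))).add (p q0) = e0
        rw [hfun, he0]
      have hx0 : SFEq (x q0) (a.star.mul (E x)) := by
        rw [hxq0, hEx]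
        exact SFEq.refl _
      have hxsol : IsSolution M p x := by
        intro q
        by_cases hq : q = q0
        · rw [hq]
          calc (matApp M x q0).add (p q0)
              ≋ ((a.mul (x q0)).add (Sig x)).add (p q0) :=
                SFEq.addl (bigSum_split q0 fun r => (M q0 r).mul (x r))
            _ ≋ (a.mul (x q0)).add ((Sig x).add (p q0)) :=
              SFEq.symm (SFEq.add_assoc _ _ _)
            _ ≋ (E x).add (a.mul (a.star.mul (E x))) :=
              SFEq.trans (SFEq.add_comm _ _) (SFEq.addr (SFEq.mulr hx0))
            _ ≋ a.star.mul (E x) := star_fix a (E x)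
            _ ≋ x q0 := SFEq.symm hx0
        · have hkey := key x hx0 ⟨q, hq⟩
          rw [hxrestr] at hkey
          calc (matApp M x q).add (p q)
              ≋ (matApp M' x' ⟨q, hq⟩).add (p' ⟨q, hq⟩) := SFEq.symm hkey
            _ ≋ x' ⟨q, hq⟩ := hx'sol ⟨q, hq⟩
            _ ≋ x q := by rw [hx]; simp only [dif_neg hq]; exact SFEq.refl _
      refine ⟨x, hxsol, ?_⟩
      intro y hy
      -- Arden at q0 for y
      have hy0 : SFEq (y q0) (a.star.mul (E y)) := by
        refine SFEq.symm (SFEq.unique_fixpoint (hM q0 q0) ?_)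
        calc (E y).add (a.mul (y q0))
            ≋ (a.mul (y q0)).add ((Sig y).add (p q0)) := SFEq.add_comm _ _
          _ ≋ ((a.mul (y q0)).add (Sig y)).add (p q0) := SFEq.add_assoc _ _ _
          _ ≋ (matApp M y q0).add (p q0) :=
              SFEq.addl (SFEq.symm (bigSum_split q0 fun r => (M q0 r).mul (y r)))
          _ ≋ y q0 := hy q0
      have hy'sol : IsSolution M' p' (fun j : Q' => y j.val) := by
        intro i
        exact SFEq.trans (key y hy0 i) (hy i.val)
      have huq : ∀ j : Q', SFEq (x' j) (y j.val) := hx'uniq _ hy'sol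
      intro q
      by_cases hq : q = q0
      · rw [hq]
        have he : SFEq e0 (E y) := by
          rw [he0, hE, hSig]
          exact SFEq.addl (bigSum_congr _ fun j _ => SFEq.mulr (huq j))
        calc x q0
            ≋ a.star.mul e0 := by rw [hxq0]; exact SFEq.refl _
          _ ≋ a.star.mul (E y) := SFEq.mulr he
          _ ≋ y q0 := SFEq.symm hy0
      · calc x q
            ≋ x' ⟨q, hq⟩ := by rw [hx]; simp only [dif_neg hq]; exact SFEq.refl _
          _ ≋ y q := huq ⟨q, hq⟩

end Main

/-- Every guarded `Q`-linear system over SF₁-expressions has a solution, and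
that solution is unique up to provable SF₁-equivalence. -/
theorem guarded_linear_system_unique_solution {σ : Type*} {Q : Type*} [Fintype Q]
    (M : Q → Q → Exp σ) (p : Q → Exp σ)
    (hM : ∀ i j, SFEq ((M i j).h) Exp.zero) :
    ∃ x : Q → Exp σ, IsSolution M p x ∧
      ∀ y : Q → Exp σ, IsSolution M p y → ∀ q, SFEq (x q) (y q) :=
  guarded_main (Fintype.card Q) Q M p rfl hM
end
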